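/- arXiv:2604.14194 — 2 statements merged into one kernel-verified Lean document; each statement's English description precedes it below -/
import Mathlib

section
/- Let X be a normed linear space over ℝ. Then for all x, y ∈ X, one has |‖x‖ - ‖y‖| ≤ ‖x‖ + ‖y‖ - |‖x + y‖ - ‖x - y‖|. -/
theorem tarski_maligranda_second {X : Type*} [NormedAddCommGroup X] [NormedSpace ℝ X]
    (x y : X) :
    |‖x‖ - ‖y‖| ≤ ‖x‖ + ‖y‖ - |‖x + y‖ - ‖x - y‖| := by
  have e1 : x + y = (x - y) + (y + y) := by abel
  have e2 : x + y = (x + x) - (x - y) := by abel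
  have e3 : x - y = (x + y) - (y + y) := by abel
  have e4 : x - y = (x + x) - (x + y) := by abel
  have h1 : ‖x + y‖ ≤ ‖x - y‖ + (‖y‖ + ‖y‖) := by
    calc ‖x + y‖ = ‖(x - y) + (y + y)‖ := by rw [← e1]
    _ ≤ ‖x - y‖ + ‖y + y‖ := norm_add_le _ _
    _ ≤ ‖x - y‖ + (‖y‖ + ‖y‖) := by linarith [norm_add_le y y]
  have h2 : ‖x + y‖ ≤ (‖x‖ + ‖x‖) + ‖x - y‖ := by
    calc ‖x + y‖ = ‖(x + x) - (x - y)‖ := by rw [← e2]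
    _ ≤ ‖x + x‖ + ‖x - y‖ := norm_sub_le _ _
    _ ≤ (‖x‖ + ‖x‖) + ‖x - y‖ := by linarith [norm_add_le x x]
  have h3 : ‖x - y‖ ≤ ‖x + y‖ + (‖y‖ + ‖y‖) := by
    calc ‖x - y‖ = ‖(x + y) - (y + y)‖ := by rw [← e3]
    _ ≤ ‖x + y‖ + ‖y + y‖ := norm_sub_le _ _
    _ ≤ ‖x + y‖ + (‖y‖ + ‖y‖) := by linarith [norm_add_le y y]
  have h4 : ‖x - y‖ ≤ (‖x‖ + ‖x‖) + ‖x + y‖ := by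
    calc ‖x - y‖ = ‖(x + x) - (x + y)‖ := by rw [← e4]
    _ ≤ ‖x + x‖ + ‖x + y‖ := norm_sub_le _ _
    _ ≤ (‖x‖ + ‖x‖) + ‖x + y‖ := by linarith [norm_add_le x x]
  rcases abs_cases (‖x‖ - ‖y‖) with ⟨ha, _⟩ | ⟨ha, _⟩ <;>
    rcases abs_cases (‖x + y‖ - ‖x - y‖) with ⟨hb, _⟩ | ⟨hb, _⟩ <;> linarith
end

section
/- Let F be a field equipped with a sub-modulus |·| such that 2 ≠ 0 in F, and let X be a vector space over F equipped with a sub-norm ‖·‖. Then for all x, y ∈ X, one has |‖x‖ - ‖y‖| ≤ ‖x‖ + ‖y‖ - (2/|2|)·‖x + y‖ + (2/|2|)·max{‖y - x‖, ‖x - y‖}, where 2 in |2| denotes the element 1 + 1 of F, the 2 in the numerators is the real number 2, and the outer |·| is the absolute value on ℝ. -/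
theorem finite_field_tarski_maligranda_second {F : Type*} [Field F] {X : Type*} [AddCommGroup X] [Module F X]
    (m : F → ℝ) (hm_nonneg : ∀ a : F, 0 ≤ m a)
    (hm_zero : ∀ a : F, m a = 0 → a = 0)
    (hm_mul : ∀ a b : F, m (a * b) ≤ m a * m b)
    (hm_add : ∀ a b : F, m (a + b) ≤ m a + m b)
    (N : X → ℝ) (hN_nonneg : ∀ x : X, 0 ≤ N x)
    (hN_zero : ∀ x : X, N x = 0 → x = 0)
    (hN_smul : ∀ (c : F) (x : X), N (c • x) ≤ m c * N x)
    (hN_add : ∀ x y : X, N (x + y) ≤ N x + N y)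
    (h2 : (2 : F) ≠ 0)
    (x y : X) :
    |N x - N y| ≤ N x + N y - (2 / m 2) * N (x + y)
      + (2 / m 2) * max (N (y - x)) (N (x - y)) := by
  have hM : 0 < m 2 := lt_of_le_of_ne (hm_nonneg 2) fun h => h2 (hm_zero 2 h.symm)
  have hx : N (x + y) ≤ m 2 * N x + N (y - x) := by
    have : x + y = (2 : F) • x + (y - x) := by
      rw [two_smul]; abel
    rw [this]
    calc N ((2 : F) • x + (y - x)) ≤ N ((2 : F) • x) + N (y - x) := hN_add _ _
      _ ≤ m 2 * N x + N (y - x) := by linarith [hN_smul (2 : F) x]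
  have hy : N (x + y) ≤ m 2 * N y + N (x - y) := by
    have : x + y = (2 : F) • y + (x - y) := by
      rw [two_smul]; abel
    rw [this]
    calc N ((2 : F) • y + (x - y)) ≤ N ((2 : F) • y) + N (x - y) := hN_add _ _
      _ ≤ m 2 * N y + N (x - y) := by linarith [hN_smul (2 : F) y]
  have hmax1 : N (y - x) ≤ max (N (y - x)) (N (x - y)) := le_max_left _ _
  have hmax2 : N (x - y) ≤ max (N (y - x)) (N (x - y)) := le_max_right _ _
  have key : (2 / m 2) * N (x + y) ≤ (2 / m 2) * max (N (y - x)) (N (x - y)) + 2 * min (N x) (N y) := by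
    rcases le_total (N x) (N y) with h | h
    · rw [min_eq_left h]
      rw [div_mul_eq_mul_div, div_mul_eq_mul_div, div_add' _ _ _ hM.ne', div_le_div_iff₀ hM hM]
      nlinarith
    · rw [min_eq_right h]
      rw [div_mul_eq_mul_div, div_mul_eq_mul_div, div_add' _ _ _ hM.ne', div_le_div_iff₀ hM hM]
      nlinarith
  rcases le_total (N x) (N y) with h | h
  · rw [abs_of_nonpos (by linarith), min_eq_left h] at *
    linarith
  · rw [abs_of_nonneg (by linarith), min_eq_right h] at *
    linarith
end
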